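/- Suppose σ is a compactly supported Borel probability measure on ℝ^d, 2 ≤ q, 1 < p < q < ∞ is a valid pair for the convolution operator T, and f is a normalized (‖f‖_p = 1) nonnegative extremizer for T : L^p(ℝ^d) → L^q(ℝ^d). Then for every N ∈ ℕ there exists a constant c_N > 0 such that f(x) ≥ c_N · ( (T^*T)^N f (x) )^{((q−1)/(p−1))^N} for almost every x ∈ ℝ^d, where (T^*T)^N denotes the N-fold composition of T^*T and T^*g(x) = ∫_{ℝ^d} g(x+y) dσ(y). -/

import Mathlib

open MeasureTheory Metric Filter
open scoped ENNReal Topology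

noncomputable section

/-- Euclidean space `ℝ^d`. -/
abbrev Euc (d : ℕ) := EuclideanSpace ℝ (Fin d)

/-- The convolution operator `T f x = ∫ f (x - y) dσ(y)`. -/
def convOp {d : ℕ} {F : Type*} [NormedAddCommGroup F] [NormedSpace ℝ F]
    (σ : Measure (Euc d)) (f : Euc d → F) (x : Euc d) : F :=
  ∫ y, f (x - y) ∂σ

/-- The adjoint operator `T* g x = ∫ g (x + y) dσ(y)`. -/
def adjOp {d : ℕ} {F : Type*} [NormedAddCommGroup F] [NormedSpace ℝ F]
    (σ : Measure (Euc d)) (g : Euc d → F) (x : Euc d) : F :=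
  ∫ y, g (x + y) ∂σ

/-- The operator norm of an operator `T` acting on functions, from `L^p` to `L^q`,
as an extended nonnegative real. -/
def opNorm {d : ℕ} {F G : Type*} [NormedAddCommGroup F] [NormedAddCommGroup G]
    (T : (Euc d → F) → Euc d → G) (p q : ℝ≥0∞) : ℝ≥0∞ :=
  ⨆ (f : Euc d → F) (_ : MemLp f p volume) (_ : eLpNorm f p volume ≠ 0),
    eLpNorm (T f) q volume / eLpNorm f p volume

/-- The Fourier decay hypothesis: `|σ̂(ξ)| ≤ C (1+|ξ|)^{-α}` for some `C < ∞`, `α > 0`,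
where `σ̂(ξ) = ∫ e^{-2πi x·ξ} dσ(x)`. -/
def FourierDecay {d : ℕ} (σ : Measure (Euc d)) : Prop :=
  ∃ C : ℝ, ∃ α : ℝ, 0 < α ∧ ∀ ξ : Euc d,
    ‖∫ x, Complex.exp (-(2 * Real.pi * (inner ℝ x ξ : ℝ)) * Complex.I) ∂σ‖
      ≤ C * (1 + ‖ξ‖) ^ (-α)

/-- `(1/p, 1/q)` lies in the interior, relative to `[0,1]²`, of the set
`R(T) = {(1/r,1/s) ∈ [0,1]² : ‖T‖_{r,s} < ∞}` (reciprocal `u = 0` corresponds to the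
exponent `∞` via `(ENNReal.ofReal u)⁻¹`). -/
def NonEndpoint {d : ℕ} (σ : Measure (Euc d)) (p q : ℝ) : Prop :=
  ∃ ε > 0, ∀ u v : ℝ, u ∈ Set.Icc (0:ℝ) 1 → v ∈ Set.Icc (0:ℝ) 1 →
    |u - 1/p| < ε → |v - 1/q| < ε →
      opNorm (convOp (F := ℂ) σ) (ENNReal.ofReal u)⁻¹ (ENNReal.ofReal v)⁻¹ < ⊤

/-!
Pass to `F = |f|` and to the `ℝ≥0∞`-valued operators `T`, `T^*`. Pairing `F` with
`H = T^*((T F)^(q-1))` gives `∫ F H = ‖T F‖_q^q = ‖T‖^q`, while duality bounds `‖H‖_{p'}` by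
`‖T‖ ‖(T F)^(q-1)‖_{q'} = ‖T‖^q`; so Hölder's inequality `∫ F H ≤ ‖F‖_p ‖H‖_{p'}` is an equality,
which forces the Euler–Lagrange equation `H = ‖T‖^q F^(p-1)`. As `σ` is a probability measure,
Jensen gives `(T^*T F)^(q-1) ≤ H`, hence `κ (T^*T F)^r ≤ F` with `r = (q-1)/(p-1) ≥ 1`.
Applying the monotone, homogeneous operator `(T^*T)^n` and Jensen once more yields
`κ ((T^*T)^(n+1) F)^r ≤ (T^*T)^n F`, and chaining these inequalities proves the claim.
-/

theorem enorm_ofReal_toReal {x : ℝ≥0∞} (hx : x ≠ ⊤) : ‖((x.toReal : ℝ) : ℂ)‖ₑ = x := by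
  rw [← ofReal_norm, Complex.norm_real, Real.norm_of_nonneg ENNReal.toReal_nonneg,
    ENNReal.ofReal_toReal hx]

theorem ENNReal.rpow_sub_one_mul_self {s : ℝ} (hs : 1 ≤ s) (x : ℝ≥0∞) :
    x ^ (s - 1) * x = x ^ s := by
  conv_rhs => rw [← sub_add_cancel s 1, ENNReal.rpow_add_of_nonneg _ _ (by linarith) zero_le_one,
    ENNReal.rpow_one]

theorem rpow_one_div_le_of_le_rpow_mul {p p' : ℝ} (hpp' : p.HolderConjugate p') {J B : ℝ≥0∞}
    (hJ : J ≠ ⊤) (h : J ≤ J ^ (1 / p) * B) : J ^ (1 / p') ≤ B := by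
  rcases eq_or_ne J 0 with rfl | hJ0
  · simp [hpp'.symm.pos]
  have hsplit : J ^ (1 / p) * J ^ (1 / p') = J := by
    rw [← ENNReal.rpow_add _ _ hJ0 hJ, hpp'.one_div_add_one_div, div_one, ENNReal.rpow_one]
  refine (ENNReal.mul_le_mul_iff_right (a := J ^ (1 / p)) (by simp [hJ0, hJ, hpp'.pos])
    (ENNReal.rpow_ne_top_of_nonneg hpp'.one_div_nonneg hJ)).mp ?_
  rwa [hsplit]

section LintegralInequalities

variable {α : Type*} [MeasurableSpace α] {μ : Measure α}

theorem eLpNorm_ofReal_eq_lintegral {ε : Type*} [ENorm ε] (g : α → ε) {t : ℝ} (ht : 0 < t) :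
    eLpNorm g (.ofReal t) μ = (∫⁻ x, ‖g x‖ₑ ^ t ∂μ) ^ (1 / t) := by
  rw [eLpNorm_eq_lintegral_rpow_enorm_toReal (by simpa using ht) ENNReal.ofReal_ne_top,
    ENNReal.toReal_ofReal ht.le]

theorem rpow_lintegral_le_lintegral_rpow [IsProbabilityMeasure μ] {u : α → ℝ≥0∞}
    (hu : AEMeasurable u μ) {s : ℝ} (hs : 1 ≤ s) :
    (∫⁻ x, u x ∂μ) ^ s ≤ ∫⁻ x, u x ^ s ∂μ := by
  rcases hs.eq_or_lt with rfl | hs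
  · simp
  have hHolder := ENNReal.lintegral_mul_le_Lp_mul_Lq μ (.conjExponent hs) hu aemeasurable_const
    (g := fun _ => 1)
  simp only [Pi.mul_apply, mul_one, ENNReal.one_rpow, lintegral_const, measure_univ] at hHolder
  rwa [one_div, ENNReal.le_rpow_inv_iff (by linarith)] at hHolder

/-- The equality case of Hölder's inequality, obtained from that of Young's inequality. -/
theorem ae_rpow_eq_of_one_le_lintegral_mul {p q : ℝ} (hpq : p.HolderConjugate q)
    {F G : α → ℝ≥0∞} (hF : AEMeasurable F μ) (hG : AEMeasurable G μ)
    (hFp : ∫⁻ x, F x ^ p ∂μ ≤ 1) (hGq : ∫⁻ x, G x ^ q ∂μ ≤ 1) (hFG : 1 ≤ ∫⁻ x, F x * G x ∂μ) :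
    ∀ᵐ x ∂μ, F x ^ p = G x ^ q := by
  set Y := fun x => F x ^ p / .ofReal p + G x ^ q / .ofReal q
  have hY : ∫⁻ x, Y x ∂μ ≤ 1 := calc
    ∫⁻ x, Y x ∂μ = (∫⁻ x, F x ^ p ∂μ) / .ofReal p + (∫⁻ x, G x ^ q ∂μ) / .ofReal q := by
      simp only [Y, div_eq_mul_inv]
      rw [lintegral_add_left' ((hF.pow_const p).mul_const _),
        lintegral_mul_const' _ _ (by simp [hpq.pos]),
        lintegral_mul_const' _ _ (by simp [hpq.symm.pos])]
    _ ≤ 1 / .ofReal p + 1 / .ofReal q := by gcongr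
    _ = 1 := by simpa only [one_div] using hpq.inv_add_inv_ennreal
  have hYFG : (fun x => F x * G x) =ᵐ[μ] Y :=
    ae_eq_of_ae_le_of_lintegral_le (.of_forall fun x => ENNReal.young_inequality _ _ hpq)
      (ne_top_of_le_ne_top ENNReal.one_ne_top
        ((lintegral_mono fun x => ENNReal.young_inequality _ _ hpq).trans hY))
      (((hF.pow_const p).div_const _).add ((hG.pow_const q).div_const _)) (hY.trans hFG)
  have hF_lt_top : ∀ᵐ x ∂μ, F x ^ p < ⊤ :=
    ae_lt_top' (hF.pow_const p) (ne_top_of_le_ne_top ENNReal.one_ne_top hFp)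
  have hG_lt_top : ∀ᵐ x ∂μ, G x ^ q < ⊤ :=
    ae_lt_top' (hG.pow_const q) (ne_top_of_le_ne_top ENNReal.one_ne_top hGq)
  filter_upwards [hYFG, hF_lt_top, hG_lt_top] with x hx hFx hGx
  rcases (ENNReal.young_inequality_eq_iff _ _ hpq).mp hx with ⟨hFtop, -⟩ | ⟨-, hGtop⟩ | h
  · simp [hFtop, hpq.pos] at hFx
  · simp [hGtop, hpq.symm.pos] at hGx
  · exact h

theorem ae_eq_mul_rpow_sub_one_of_le_lintegral_mul {p p' : ℝ} (hpp' : p.HolderConjugate p')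
    {F H : α → ℝ≥0∞} (hF : AEMeasurable F μ) (hH : AEMeasurable H μ) {C : ℝ≥0∞} (hC0 : C ≠ 0)
    (hC : C ≠ ⊤) (hFp : ∫⁻ x, F x ^ p ∂μ ≤ 1) (hHp' : ∫⁻ x, H x ^ p' ∂μ ≤ C ^ p')
    (hFH : C ≤ ∫⁻ x, F x * H x ∂μ) : H =ᵐ[μ] fun x => C * F x ^ (p - 1) := by
  have hc : C⁻¹ ≠ ⊤ := ENNReal.inv_ne_top.mpr hC0
  have hcH : ∀ᵐ x ∂μ, F x ^ p = (C⁻¹ * H x) ^ p' := by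
    refine ae_rpow_eq_of_one_le_lintegral_mul hpp' hF (hH.const_mul _) hFp ?_ ?_
    · simp_rw [ENNReal.mul_rpow_of_nonneg _ _ hpp'.symm.nonneg]
      rw [lintegral_const_mul' _ _ (ENNReal.rpow_ne_top_of_nonneg hpp'.symm.nonneg hc)]
      calc C⁻¹ ^ p' * ∫⁻ x, H x ^ p' ∂μ ≤ C⁻¹ ^ p' * C ^ p' := by gcongr
        _ = 1 := by rw [← ENNReal.mul_rpow_of_nonneg _ _ hpp'.symm.nonneg,
          ENNReal.inv_mul_cancel hC0 hC, ENNReal.one_rpow]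
    · simp_rw [mul_left_comm (F _) C⁻¹]
      rw [lintegral_const_mul' _ _ hc, ← ENNReal.inv_mul_cancel hC0 hC]
      gcongr
  filter_upwards [hcH] with x hx
  calc H x = C * (C⁻¹ * H x) := by rw [← mul_assoc, ENNReal.mul_inv_cancel hC0 hC, one_mul]
    _ = C * ((C⁻¹ * H x) ^ p') ^ p'⁻¹ := by rw [ENNReal.rpow_rpow_inv hpp'.symm.ne_zero]
    _ = C * F x ^ (p - 1) := by
      rw [← hx, ← ENNReal.rpow_mul, ← div_eq_mul_inv, hpp'.div_conj_eq_sub_one]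

theorem rpow_lintegral_iSup_rpow_le {g : ℕ → α → ℝ≥0∞} (hg : ∀ n, Measurable (g n))
    (hmono : Monotone g) {s : ℝ} (hs : 0 < s) {B : ℝ≥0∞}
    (hB : ∀ n, (∫⁻ x, g n x ^ s ∂μ) ^ (1 / s) ≤ B) :
    (∫⁻ x, (⨆ n, g n x) ^ s ∂μ) ^ (1 / s) ≤ B := by
  simp_rw [← ENNReal.orderIsoRpow_apply s hs, OrderIso.map_iSup, ENNReal.orderIsoRpow_apply]
  rw [lintegral_iSup (fun n => (hg n).pow_const s)
    fun m n hmn x => ENNReal.rpow_le_rpow (hmono hmn x) hs.le,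
    ← ENNReal.orderIsoRpow_apply (1 / s) (by positivity), OrderIso.map_iSup]
  exact iSup_le hB

end LintegralInequalities

section Truncation

variable {α : Type*} [MeasurableSpace α] (μ : Measure α) [SigmaFinite μ]

def truncation (u : α → ℝ≥0∞) (n : ℕ) : α → ℝ≥0∞ :=
  (spanningSets μ n).indicator fun x => min (u x) n

variable {μ}

theorem Measurable.truncation {u : α → ℝ≥0∞} (hu : Measurable u) (n : ℕ) :
    Measurable (truncation μ u n) :=
  (hu.min measurable_const).indicator (measurableSet_spanningSets μ n)

theorem truncation_le (u : α → ℝ≥0∞) (n : ℕ) (x : α) : truncation μ u n x ≤ u x :=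
  (Set.indicator_le_self' (fun _ _ => zero_le) x).trans (min_le_left _ _)

theorem truncation_le_natCast (u : α → ℝ≥0∞) (n : ℕ) (x : α) : truncation μ u n x ≤ n :=
  (Set.indicator_le_self' (fun _ _ => zero_le) x).trans (min_le_right _ _)

theorem monotone_truncation (u : α → ℝ≥0∞) : Monotone (truncation μ u) := fun m n hmn =>
  Set.indicator_le_indicator_of_subset (monotone_spanningSets μ hmn) (fun _ => zero_le) |>.trans
    fun x => Set.indicator_le_indicator (min_le_min_left _ (by exact_mod_cast hmn))

theorem iSup_truncation (u : α → ℝ≥0∞) (x : α) : ⨆ n, truncation μ u n x = u x := by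
  refine le_antisymm (iSup_le fun n => truncation_le u n x) ?_
  obtain ⟨N, hN⟩ := Set.mem_iUnion.mp ((iUnion_spanningSets μ).symm ▸ Set.mem_univ x)
  calc u x = ⨆ n : ℕ, min (u x) n := by rw [← inf_iSup_eq, ENNReal.iSup_natCast, inf_top_eq]
    _ ≤ ⨆ n, truncation μ u n x := iSup_le fun n => by
      refine le_iSup_of_le (max n N) ?_
      rw [truncation, Set.indicator_of_mem (monotone_spanningSets μ (le_max_right n N) hN)]
      exact min_le_min_left _ (by exact_mod_cast le_max_left n N)

theorem lintegral_truncation_rpow_ne_top (u : α → ℝ≥0∞) (n : ℕ) {s : ℝ} (hs : 0 < s) :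
    ∫⁻ x, truncation μ u n x ^ s ∂μ ≠ ⊤ := by
  have hle : ∀ x, truncation μ u n x ^ s
      ≤ (spanningSets μ n).indicator (fun _ => (n : ℝ≥0∞) ^ s) x := by
    intro x
    by_cases hx : x ∈ spanningSets μ n
    · simp only [Set.indicator_of_mem hx]
      exact ENNReal.rpow_le_rpow (truncation_le_natCast u n x) hs.le
    · simp [truncation, hx, hs]
  refine ne_top_of_le_ne_top ?_ (lintegral_mono hle)
  rw [lintegral_indicator_const (measurableSet_spanningSets μ n)]
  exact ENNReal.mul_ne_top (ENNReal.rpow_ne_top_of_nonneg hs.le (ENNReal.natCast_ne_top n))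
    (measure_spanningSets_lt_top μ n).ne

end Truncation

section ConvolutionOperators

variable {G : Type*} [MeasurableSpace G] [AddGroup G]

/- `ℝ≥0∞`-valued versions of `convOp`, `adjOp` and `T^*T`: every integral is defined, so these
operators are monotone and commute with monotone limits, without integrability conditions. -/

def lconvOp (σ : Measure G) (F : G → ℝ≥0∞) (x : G) : ℝ≥0∞ := ∫⁻ y, F (x - y) ∂σ

def ladjOp (σ : Measure G) (F : G → ℝ≥0∞) (x : G) : ℝ≥0∞ := ∫⁻ y, F (x + y) ∂σ

def ladjConvOp (σ : Measure G) (F : G → ℝ≥0∞) : G → ℝ≥0∞ := ladjOp σ (lconvOp σ F)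

variable {σ : Measure G}

theorem monotone_lconvOp : Monotone (lconvOp σ) := fun _ _ h _ => lintegral_mono fun _ => h _

theorem monotone_ladjOp : Monotone (ladjOp σ) := fun _ _ h _ => lintegral_mono fun _ => h _

theorem monotone_ladjConvOp : Monotone (ladjConvOp σ) :=
  monotone_ladjOp.comp monotone_lconvOp

theorem commute_ladjConvOp_smul {c : ℝ≥0∞} (hc : c ≠ ⊤) :
    Function.Commute (ladjConvOp σ) (c • ·) := fun F => by
  ext x
  simp only [ladjConvOp, ladjOp, lconvOp, Pi.smul_apply, smul_eq_mul]
  simp_rw [lintegral_const_mul' c _ hc]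

variable [MeasurableAdd₂ G]

theorem Measurable.ladjOp [SFinite σ] {F : G → ℝ≥0∞} (hF : Measurable F) :
    Measurable (ladjOp σ F) :=
  (hF.comp (measurable_fst.add measurable_snd)).lintegral_prod_right'

theorem rpow_ladjOp_le [IsProbabilityMeasure σ] {s : ℝ} (hs : 1 ≤ s) {F : G → ℝ≥0∞}
    (hF : Measurable F) (x : G) : ladjOp σ F x ^ s ≤ ladjOp σ (fun z => F z ^ s) x :=
  rpow_lintegral_le_lintegral_rpow (hF.comp (measurable_const.add measurable_id)).aemeasurable hs

theorem ae_ae_add (μ : Measure G) [μ.IsAddRightInvariant] [SFinite μ] [SFinite σ] {P : G → Prop}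
    (h : ∀ᵐ z ∂μ, P z) : ∀ᵐ x ∂μ, ∀ᵐ y ∂σ, P (x + y) :=
  Measure.ae_ae_of_ae_prod <| (QuasiMeasurePreserving.prod_of_left measurable_add
    (.of_forall fun y => (measurePreserving_add_right μ y).quasiMeasurePreserving)).ae h

theorem ladjOp_mono_ae {μ : Measure G} [μ.IsAddRightInvariant] [SFinite μ] [SFinite σ]
    {F F' : G → ℝ≥0∞} (h : F ≤ᵐ[μ] F') : ladjOp σ F ≤ᵐ[μ] ladjOp σ F' := by
  filter_upwards [ae_ae_add (σ := σ) μ h] with x hx using lintegral_mono_ae hx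

variable [MeasurableNeg G]

theorem Measurable.lconvOp [SFinite σ] {F : G → ℝ≥0∞} (hF : Measurable F) :
    Measurable (lconvOp σ F) :=
  (hF.comp (measurable_fst.sub measurable_snd)).lintegral_prod_right'

theorem Measurable.ladjConvOp [SFinite σ] {F : G → ℝ≥0∞} (hF : Measurable F) :
    Measurable (ladjConvOp σ F) :=
  hF.lconvOp.ladjOp

theorem lconvOp_iSup {g : ℕ → G → ℝ≥0∞} (hg : ∀ n, Measurable (g n)) (hmono : Monotone g) :
    lconvOp σ (fun x => ⨆ n, g n x) = fun x => ⨆ n, lconvOp σ (g n) x :=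
  funext fun _ => lintegral_iSup (fun n => (hg n).comp (measurable_const.sub measurable_id))
    fun _ _ hmn _ => hmono hmn _

section Jensen

variable [IsProbabilityMeasure σ] {s : ℝ} (hs : 1 ≤ s)
include hs

theorem rpow_lconvOp_le {F : G → ℝ≥0∞} (hF : Measurable F) (x : G) :
    lconvOp σ F x ^ s ≤ lconvOp σ (fun z => F z ^ s) x :=
  rpow_lintegral_le_lintegral_rpow (hF.comp (measurable_const.sub measurable_id)).aemeasurable hs

theorem rpow_ladjConvOp_le {F : G → ℝ≥0∞} (hF : Measurable F) (x : G) :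
    ladjConvOp σ F x ^ s ≤ ladjConvOp σ (fun z => F z ^ s) x :=
  (rpow_ladjOp_le hs hF.lconvOp x).trans (monotone_ladjOp (rpow_lconvOp_le hs hF) x)

theorem rpow_iterate_ladjConvOp_le (n : ℕ) {F : G → ℝ≥0∞} (hF : Measurable F) (x : G) :
    (ladjConvOp σ)^[n] F x ^ s ≤ (ladjConvOp σ)^[n] (fun z => F z ^ s) x := by
  induction n generalizing F with
  | zero => rfl
  | succ n ih =>
    simp only [Function.iterate_succ_apply]
    exact (ih hF.ladjConvOp).trans (monotone_ladjConvOp.iterate n (rpow_ladjConvOp_le hs hF) x)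

end Jensen

section Translation

variable (μ : Measure G) [μ.IsAddRightInvariant] [SFinite μ] [SFinite σ]

theorem ae_ae_sub {P : G → Prop} (h : ∀ᵐ z ∂μ, P z) : ∀ᵐ x ∂μ, ∀ᵐ y ∂σ, P (x - y) :=
  Measure.ae_ae_of_ae_prod ((quasiMeasurePreserving_sub_of_right_invariant μ σ).ae h)

variable {μ}

theorem lconvOp_mono_ae {F F' : G → ℝ≥0∞} (h : F ≤ᵐ[μ] F') : lconvOp σ F ≤ᵐ[μ] lconvOp σ F' := by
  filter_upwards [ae_ae_sub (σ := σ) μ h] with x hx using lintegral_mono_ae hx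

theorem iterate_ladjConvOp_mono_ae (n : ℕ) {F F' : G → ℝ≥0∞} (h : F ≤ᵐ[μ] F') :
    (ladjConvOp σ)^[n] F ≤ᵐ[μ] (ladjConvOp σ)^[n] F' := by
  induction n generalizing F F' with
  | zero => exact h
  | succ n ih => exact ih (ladjOp_mono_ae (lconvOp_mono_ae h))

theorem lintegral_mul_ladjOp {u w : G → ℝ≥0∞} (hu : Measurable u) (hw : Measurable w) :
    ∫⁻ x, u x * ladjOp σ w x ∂μ = ∫⁻ x, lconvOp σ u x * w x ∂μ := by
  have hL : ∀ x, u x * ladjOp σ w x = ∫⁻ y, u x * w (x + y) ∂σ := fun x =>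
    (lintegral_const_mul _ (hw.comp (measurable_const.add measurable_id))).symm
  have hR : ∀ x, lconvOp σ u x * w x = ∫⁻ y, u (x - y) * w x ∂σ := fun x =>
    (lintegral_mul_const _ (hu.comp (measurable_const.sub measurable_id))).symm
  simp_rw [hL, hR]
  rw [lintegral_lintegral_swap ((hu.comp measurable_fst).mul
      (hw.comp (measurable_fst.add measurable_snd))).aemeasurable,
    lintegral_lintegral_swap (f := fun x y => u (x - y) * w x)
      ((hu.comp (measurable_fst.sub measurable_snd)).mul (hw.comp measurable_fst)).aemeasurable]
  refine lintegral_congr fun y => ?_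
  simpa using (measurePreserving_add_right μ y).lintegral_comp
    (f := fun z => u (z - y) * w z) (by fun_prop)

theorem lintegral_mul_ladjOp_rpow_lconvOp {q : ℝ} (hq : 1 ≤ q) {F : G → ℝ≥0∞}
    (hF : Measurable F) :
    ∫⁻ x, F x * ladjOp σ (fun y => lconvOp σ F y ^ (q - 1)) x ∂μ = ∫⁻ x, lconvOp σ F x ^ q ∂μ := by
  rw [lintegral_mul_ladjOp hF (hF.lconvOp.pow_const _)]
  exact lintegral_congr fun x => by rw [mul_comm, ENNReal.rpow_sub_one_mul_self hq]

end Translation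

section Iteration

variable {μ : Measure G} [μ.IsAddRightInvariant] [SFinite μ] [IsProbabilityMeasure σ]

theorem exists_mul_rpow_iterate_ladjConvOp_le {r : ℝ} (hr : 1 ≤ r) {F : G → ℝ≥0∞}
    (hF : Measurable F) {κ : ℝ≥0∞} (hκ0 : κ ≠ 0) (hκ : κ ≠ ⊤)
    (hbase : ∀ᵐ x ∂μ, κ * ladjConvOp σ F x ^ r ≤ F x) (N : ℕ) :
    ∃ c : ℝ≥0∞, c ≠ 0 ∧ c ≠ ⊤ ∧ ∀ᵐ x ∂μ, c * (ladjConvOp σ)^[N] F x ^ (r ^ N) ≤ F x := by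
  have hstep : ∀ n, ∀ᵐ x ∂μ,
      κ * (ladjConvOp σ)^[n + 1] F x ^ r ≤ (ladjConvOp σ)^[n] F x := fun n => by
    filter_upwards [iterate_ladjConvOp_mono_ae (σ := σ) n hbase] with x hx
    calc κ * (ladjConvOp σ)^[n + 1] F x ^ r
        ≤ κ * (ladjConvOp σ)^[n] (fun z => ladjConvOp σ F z ^ r) x := by
          rw [Function.iterate_succ_apply]
          gcongr
          exact rpow_iterate_ladjConvOp_le hr n hF.ladjConvOp x
      _ = (ladjConvOp σ)^[n] (κ • fun z => ladjConvOp σ F z ^ r) x := by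
          rw [(commute_ladjConvOp_smul hκ).iterate_left n]
          rfl
      _ ≤ (ladjConvOp σ)^[n] F x := hx
  induction N with
  | zero => exact ⟨1, one_ne_zero, ENNReal.one_ne_top, .of_forall fun x => by simp⟩
  | succ n ih =>
    obtain ⟨c, hc0, hc, hcF⟩ := ih
    have hr0 : 0 < r ^ n := pow_pos (by linarith) n
    refine ⟨c * κ ^ (r ^ n), mul_ne_zero hc0 (by simp [hκ0, hκ, hr0]),
      ENNReal.mul_ne_top hc (ENNReal.rpow_ne_top_of_nonneg hr0.le hκ), ?_⟩
    filter_upwards [hstep n, hcF] with x hstep hcF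
    calc c * κ ^ (r ^ n) * (ladjConvOp σ)^[n + 1] F x ^ (r ^ (n + 1))
        = c * (κ * (ladjConvOp σ)^[n + 1] F x ^ r) ^ (r ^ n) := by
          rw [ENNReal.mul_rpow_of_nonneg _ _ hr0.le, ← ENNReal.rpow_mul, ← pow_succ', mul_assoc]
      _ ≤ c * (ladjConvOp σ)^[n] F x ^ (r ^ n) := by gcongr
      _ ≤ F x := hcF

end Iteration

end ConvolutionOperators

section Euclidean

variable {d : ℕ} {σ : Measure (Euc d)}

theorem enorm_convOp_le_lconvOp {E : Type*} [NormedAddCommGroup E] [NormedSpace ℝ E]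
    (g : Euc d → E) (x : Euc d) : ‖convOp σ g x‖ₑ ≤ lconvOp σ (fun z => ‖g z‖ₑ) x :=
  enorm_integral_le_lintegral_enorm _

theorem enorm_adjOp_le_ladjOp {E : Type*} [NormedAddCommGroup E] [NormedSpace ℝ E]
    (g : Euc d → E) (x : Euc d) : ‖adjOp σ g x‖ₑ ≤ ladjOp σ (fun z => ‖g z‖ₑ) x :=
  enorm_integral_le_lintegral_enorm _

theorem iterate_adjOp_convOp_nonneg {f : Euc d → ℝ} (hf : ∀ x, 0 ≤ f x) (N : ℕ) (x : Euc d) :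
    0 ≤ (fun g => adjOp σ (convOp σ g))^[N] f x := by
  induction N generalizing x with
  | zero => exact hf x
  | succ n ih =>
    rw [Function.iterate_succ_apply']
    exact integral_nonneg fun _ => integral_nonneg fun _ => ih _

variable [SFinite σ]

theorem enorm_iterate_adjOp_convOp_le {E : Type*} [NormedAddCommGroup E] [NormedSpace ℝ E]
    {f : Euc d → E} {F : Euc d → ℝ≥0∞} (hfF : (fun x => ‖f x‖ₑ) ≤ᵐ[volume] F) (N : ℕ) :
    (fun x => ‖(fun g => adjOp σ (convOp σ g))^[N] f x‖ₑ) ≤ᵐ[volume] (ladjConvOp σ)^[N] F := by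
  induction N with
  | zero => exact hfF
  | succ n ih =>
    simp only [Function.iterate_succ_apply']
    filter_upwards [ladjOp_mono_ae (σ := σ) (lconvOp_mono_ae (σ := σ) ih)] with x hx
    exact (enorm_adjOp_le_ladjOp _ x).trans
      ((monotone_ladjOp (enorm_convOp_le_lconvOp _) x).trans hx)

theorem eLpNorm_convOp_le_opNorm_mul {p : ℝ≥0∞} (hp : p ≠ 0) (q : ℝ≥0∞) {g : Euc d → ℂ}
    (hg : MemLp g p volume) :
    eLpNorm (convOp σ g) q volume ≤ opNorm (convOp (F := ℂ) σ) p q * eLpNorm g p volume := by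
  by_cases hg0 : eLpNorm g p volume = 0
  · have hTg : convOp σ g =ᵐ[volume] 0 := by
      filter_upwards [ae_ae_sub (σ := σ) volume ((eLpNorm_eq_zero_iff hg.1 hp).mp hg0)] with x hx
      simpa [convOp] using integral_congr_ae hx
    simp [eLpNorm_congr_ae hTg]
  · exact (ENNReal.div_le_iff hg0 hg.2.ne).mp (le_iSup₂_of_le g hg (le_iSup_of_le hg0 le_rfl))

end Euclidean

section Extremizers

variable {d : ℕ} {σ : Measure (Euc d)} [IsFiniteMeasure σ] {p q : ℝ}

theorem lintegral_lconvOp_rpow_le_of_le (hp : 0 < p) (hq : 0 < q) {φ : Euc d → ℝ≥0∞}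
    (hφ : Measurable φ) {C : ℝ≥0∞} (hC : C ≠ ⊤) (hφC : ∀ x, φ x ≤ C)
    (hφp : ∫⁻ x, φ x ^ p ≠ ⊤) :
    (∫⁻ x, lconvOp σ φ x ^ q) ^ (1 / q)
      ≤ opNorm (convOp (F := ℂ) σ) (.ofReal p) (.ofReal q) * (∫⁻ x, φ x ^ p) ^ (1 / p) := by
  set v : Euc d → ℂ := fun x => ((φ x).toReal : ℂ)
  have hφ_ne_top : ∀ x, φ x ≠ ⊤ := fun x => ne_top_of_le_ne_top hC (hφC x)
  have hv : ∀ x, ‖v x‖ₑ = φ x := fun x => enorm_ofReal_toReal (hφ_ne_top x)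
  have hTv : ∀ x, ‖convOp σ v x‖ₑ = lconvOp σ φ x := by
    intro x
    have hTφ : lconvOp σ φ x ≠ ⊤ := ne_top_of_le_ne_top
      (ENNReal.mul_ne_top hC (measure_ne_top σ Set.univ))
      ((lintegral_mono fun y => hφC (x - y)).trans_eq (lintegral_const C))
    change ‖∫ y, ((φ (x - y)).toReal : ℂ) ∂σ‖ₑ = _
    rw [integral_complex_ofReal, integral_toReal (f := fun y => φ (x - y)) (by fun_prop)
      (.of_forall fun y => (hφ_ne_top _).lt_top)]
    exact enorm_ofReal_toReal hTφ
  have hvp : eLpNorm v (.ofReal p) volume = (∫⁻ x, φ x ^ p) ^ (1 / p) := by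
    simp only [eLpNorm_ofReal_eq_lintegral _ hp, hv]
  have hv_memLp : MemLp v (.ofReal p) volume :=
    ⟨(by fun_prop : Measurable v).aestronglyMeasurable,
      hvp ▸ ENNReal.rpow_lt_top_of_nonneg (by positivity) hφp⟩
  calc (∫⁻ x, lconvOp σ φ x ^ q) ^ (1 / q) = eLpNorm (convOp σ v) (.ofReal q) volume := by
        simp only [eLpNorm_ofReal_eq_lintegral _ hq, hTv]
    _ ≤ _ := eLpNorm_convOp_le_opNorm_mul (by simpa using hp) _ hv_memLp
    _ = _ := by rw [hvp]

theorem lintegral_lconvOp_rpow_le (hp : 0 < p) (hq : 0 < q) {φ : Euc d → ℝ≥0∞}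
    (hφ : Measurable φ) :
    (∫⁻ x, lconvOp σ φ x ^ q) ^ (1 / q)
      ≤ opNorm (convOp (F := ℂ) σ) (.ofReal p) (.ofReal q) * (∫⁻ x, φ x ^ p) ^ (1 / p) := by
  have htrunc : ∀ n, Measurable (truncation volume φ n) := hφ.truncation
  have hsup : lconvOp σ φ = fun x => ⨆ n, lconvOp σ (truncation volume φ n) x := by
    simp_rw [← lconvOp_iSup htrunc (monotone_truncation φ), iSup_truncation]
  rw [hsup]
  refine rpow_lintegral_iSup_rpow_le (fun n => (htrunc n).lconvOp)
    (fun m n hmn => monotone_lconvOp (monotone_truncation φ hmn)) hq fun n => ?_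
  refine (lintegral_lconvOp_rpow_le_of_le hp hq (htrunc n) (ENNReal.natCast_ne_top n)
    (truncation_le_natCast (μ := volume) φ n)
    (lintegral_truncation_rpow_ne_top (μ := volume) φ n hp)).trans ?_
  gcongr with x
  exact truncation_le (μ := volume) φ n x

theorem lintegral_ladjOp_rpow_le {p' q' : ℝ} (hpp' : p.HolderConjugate p')
    (hqq' : q.HolderConjugate q') {w : Euc d → ℝ≥0∞} (hw : Measurable w) :
    (∫⁻ x, ladjOp σ w x ^ p') ^ (1 / p')
      ≤ opNorm (convOp (F := ℂ) σ) (.ofReal p) (.ofReal q) * (∫⁻ x, w x ^ q') ^ (1 / q') := by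
  set A := opNorm (convOp (F := ℂ) σ) (.ofReal p) (.ofReal q)
  set S := ladjOp σ w
  have hS : Measurable S := hw.ladjOp
  rw [← funext (iSup_truncation (μ := volume) S)]
  refine rpow_lintegral_iSup_rpow_le hS.truncation (monotone_truncation S) hpp'.symm.pos
    fun n => rpow_one_div_le_of_le_rpow_mul hpp'
      (lintegral_truncation_rpow_ne_top S n hpp'.symm.pos) ?_
  -- Duality: test `S` against `ψ = Sₙ ^ (p' - 1)`. Then `∫ ψ ^ p = ∫ Sₙ ^ p'`, which the
  -- truncation makes finite, so that it can be cancelled.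
  set Sn := truncation volume S n
  set ψ := fun x => Sn x ^ (p' - 1)
  have hψ : Measurable ψ := (hS.truncation n).pow_const _
  have hψp : ∫⁻ x, ψ x ^ p = ∫⁻ x, Sn x ^ p' := by
    simp only [ψ, ← ENNReal.rpow_mul, hpp'.symm.sub_one_mul_conj]
  calc ∫⁻ x, Sn x ^ p' ≤ ∫⁻ x, ψ x * S x := lintegral_mono fun x => by
        rw [← ENNReal.rpow_sub_one_mul_self hpp'.symm.lt.le]
        exact mul_le_mul_right (truncation_le S n x) _
    _ = ∫⁻ x, lconvOp σ ψ x * w x := lintegral_mul_ladjOp hψ hw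
    _ ≤ (∫⁻ x, lconvOp σ ψ x ^ q) ^ (1 / q) * (∫⁻ x, w x ^ q') ^ (1 / q') :=
        ENNReal.lintegral_mul_le_Lp_mul_Lq _ hqq' hψ.lconvOp.aemeasurable hw.aemeasurable
    _ ≤ A * (∫⁻ x, Sn x ^ p') ^ (1 / p) * (∫⁻ x, w x ^ q') ^ (1 / q') := by
        gcongr
        rw [← hψp]
        exact lintegral_lconvOp_rpow_le hpp'.pos hqq'.pos hψ
    _ = (∫⁻ x, Sn x ^ p') ^ (1 / p) * (A * (∫⁻ x, w x ^ q') ^ (1 / q')) := by ring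

/-- The Euler–Lagrange equation of a normalized extremizer. -/
theorem ladjOp_rpow_lconvOp_ae_eq (hp : 1 < p) (hq : 1 < q)
    (hA : opNorm (convOp (F := ℂ) σ) (.ofReal p) (.ofReal q) ≠ ⊤) {F : Euc d → ℝ≥0∞}
    (hF : Measurable F) (hFp : ∫⁻ x, F x ^ p = 1)
    (hFq : ∫⁻ x, lconvOp σ F x ^ q = opNorm (convOp (F := ℂ) σ) (.ofReal p) (.ofReal q) ^ q) :
    ladjOp σ (fun x => lconvOp σ F x ^ (q - 1)) =ᵐ[volume]
      fun x => opNorm (convOp (F := ℂ) σ) (.ofReal p) (.ofReal q) ^ q * F x ^ (p - 1) := by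
  set A := opNorm (convOp (F := ℂ) σ) (.ofReal p) (.ofReal q) with hA_def
  set H := ladjOp σ (fun x => lconvOp σ F x ^ (q - 1))
  have hH : Measurable H := (hF.lconvOp.pow_const _).ladjOp
  rcases eq_or_ne A 0 with hA0 | hA0
  · have hTF : lconvOp σ F =ᵐ[volume] 0 := ENNReal.ae_eq_zero_of_lintegral_rpow_eq_zero
      (by linarith) hF.lconvOp.aemeasurable (by simp [hFq, hA0, zero_lt_one.trans hq])
    filter_upwards [ladjOp_mono_ae (σ := σ) (hTF.fun_comp (· ^ (q - 1))).le] with x hx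
    simpa [H, hA0, zero_lt_one.trans hq, sub_pos.2 hq, ladjOp] using hx
  have hAq0 : A ^ q ≠ 0 := by simp [hA0, hA, zero_lt_one.trans hq]
  have hAq : A ^ q ≠ ⊤ := ENNReal.rpow_ne_top_of_nonneg (by linarith) hA
  set p' := p.conjExponent
  set q' := q.conjExponent
  have hpp' : p.HolderConjugate p' := .conjExponent hp
  have hqq' : q.HolderConjugate q' := .conjExponent hq
  have hFH : ∫⁻ x, F x * H x = A ^ q := (lintegral_mul_ladjOp_rpow_lconvOp hq.le hF).trans hFq
  have hHp' : ∫⁻ x, H x ^ p' ≤ (A ^ q) ^ p' := by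
    have h := lintegral_ladjOp_rpow_le (σ := σ) hpp' hqq'
      ((hF.lconvOp (σ := σ)).pow_const (q - 1))
    simp_rw [← ENNReal.rpow_mul, hqq'.sub_one_mul_conj] at h
    rw [← hA_def, hFq, ← ENNReal.rpow_mul, mul_one_div, hqq'.div_conj_eq_sub_one, mul_comm,
      ENNReal.rpow_sub_one_mul_self hq.le] at h
    rwa [one_div, ENNReal.rpow_inv_le_iff hpp'.symm.pos] at h
  exact ae_eq_mul_rpow_sub_one_of_le_lintegral_mul hpp' hF.aemeasurable hH.aemeasurable hAq0 hAq
    hFp.le hHp' hFH.ge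

theorem exists_measurable_extremizer_enorm {E : Type*} [NormedAddCommGroup E] [NormedSpace ℝ E]
    (hp : 0 < p) (hq : 0 < q) {f : Euc d → E} (hf : AEStronglyMeasurable f volume)
    (hnorm : eLpNorm f (.ofReal p) volume = 1)
    (hext : opNorm (convOp (F := ℂ) σ) (.ofReal p) (.ofReal q)
      ≤ eLpNorm (convOp σ f) (.ofReal q) volume) :
    ∃ F : Euc d → ℝ≥0∞, Measurable F ∧ (fun x => ‖f x‖ₑ) =ᵐ[volume] F ∧
      ∫⁻ x, F x ^ p = 1 ∧
      ∫⁻ x, lconvOp σ F x ^ q = opNorm (convOp (F := ℂ) σ) (.ofReal p) (.ofReal q) ^ q := by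
  obtain ⟨F, hF, hfF⟩ : ∃ F, Measurable F ∧ (fun x => ‖f x‖ₑ) =ᵐ[volume] F :=
    ⟨_, hf.enorm.measurable_mk, hf.enorm.ae_eq_mk⟩
  refine ⟨F, hF, hfF, ?_⟩
  have hFp : ∫⁻ x, F x ^ p = 1 := by
    have hFf : ∫⁻ x, ‖f x‖ₑ ^ p = ∫⁻ x, F x ^ p := lintegral_congr_ae (hfF.fun_comp (· ^ p))
    rw [eLpNorm_ofReal_eq_lintegral _ hp, hFf] at hnorm
    simpa [one_div, hp.ne'] using congrArg (· ^ p) hnorm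
  refine ⟨hFp, ?_⟩
  have hTF : (∫⁻ x, lconvOp σ F x ^ q) ^ (1 / q)
      = opNorm (convOp (F := ℂ) σ) (.ofReal p) (.ofReal q) := by
    refine le_antisymm ?_ (hext.trans ?_)
    · simpa [hFp] using lintegral_lconvOp_rpow_le (σ := σ) hp hq hF
    · rw [eLpNorm_ofReal_eq_lintegral _ hq]
      gcongr ?_ ^ _
      refine lintegral_mono_ae ?_
      filter_upwards [lconvOp_mono_ae (σ := σ) hfF.le] with x hx
      gcongr
      exact (enorm_convOp_le_lconvOp f x).trans hx
  rw [← hTF, one_div, ENNReal.rpow_inv_rpow hq.ne']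

end Extremizers

section Iterates

variable {d : ℕ} {σ : Measure (Euc d)} [IsProbabilityMeasure σ] {p q : ℝ}

theorem exists_mul_rpow_ladjConvOp_le (hp : 1 < p) (hq : 2 ≤ q)
    (hA : opNorm (convOp (F := ℂ) σ) (.ofReal p) (.ofReal q) ≠ ⊤) {F : Euc d → ℝ≥0∞}
    (hF : Measurable F) (hFp : ∫⁻ x, F x ^ p = 1)
    (hFq : ∫⁻ x, lconvOp σ F x ^ q = opNorm (convOp (F := ℂ) σ) (.ofReal p) (.ofReal q) ^ q) :
    ∃ κ : ℝ≥0∞, κ ≠ 0 ∧ κ ≠ ⊤ ∧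
      ∀ᵐ x, κ * ladjConvOp σ F x ^ ((q - 1) / (p - 1)) ≤ F x := by
  -- enlarging `‖T‖ ^ q` to `C ≥ 1` keeps `κ = C ^ (-1 / (p - 1))` finite when `‖T‖ = 0`
  set C := max (opNorm (convOp (F := ℂ) σ) (.ofReal p) (.ofReal q) ^ q) 1
  have hC0 : C ≠ 0 := (zero_lt_one.trans_le (le_max_right _ _)).ne'
  have hC : C ≠ ⊤ := max_ne_top (ENNReal.rpow_ne_top_of_nonneg (by linarith) hA) ENNReal.one_ne_top
  have hp1 : 0 < p - 1 := by linarith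
  refine ⟨(C ^ (p - 1)⁻¹)⁻¹, by simp [hC, hp.le], by simp [hC0, hp1, hp.le], ?_⟩
  filter_upwards [ladjOp_rpow_lconvOp_ae_eq hp (by linarith) hA hF hFp hFq] with x hx
  have hJensen : ladjConvOp σ F x ^ (q - 1) ≤ C * F x ^ (p - 1) :=
    (rpow_ladjOp_le (by linarith) hF.lconvOp x).trans
      (hx.trans_le (by gcongr; exact le_max_left _ _))
  calc (C ^ (p - 1)⁻¹)⁻¹ * ladjConvOp σ F x ^ ((q - 1) / (p - 1))
      = (C ^ (p - 1)⁻¹)⁻¹ * (ladjConvOp σ F x ^ (q - 1)) ^ (p - 1)⁻¹ := by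
        rw [← ENNReal.rpow_mul, div_eq_mul_inv]
    _ ≤ (C ^ (p - 1)⁻¹)⁻¹ * (C * F x ^ (p - 1)) ^ (p - 1)⁻¹ := by gcongr
    _ = F x := by
        rw [ENNReal.mul_rpow_of_nonneg _ _ (by positivity), ENNReal.rpow_rpow_inv hp1.ne',
          ← mul_assoc, ENNReal.inv_mul_cancel (by simp [hC0, hp1, hp.le]) (by simp [hC, hp.le]),
          one_mul]

end Iterates

theorem extremizer_lower_bound_iterates_general
    (d : ℕ)
    (σ : Measure (Euc d)) [IsProbabilityMeasure σ]
    (p q : ℝ) (hp : 1 < p) (hpq : p < q) (hq2 : 2 ≤ q)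
    (hvalid : opNorm (convOp (F := ℂ) σ) (ENNReal.ofReal p) (ENNReal.ofReal q) < ⊤)
    (f : Euc d → ℝ) (hfpos : ∀ x, 0 ≤ f x)
    (hf : MemLp f (ENNReal.ofReal p) volume)
    (hnorm : eLpNorm f (ENNReal.ofReal p) volume = 1)
    (hext : eLpNorm (convOp σ f) (ENNReal.ofReal q) volume
      = opNorm (convOp (F := ℂ) σ) (ENNReal.ofReal p) (ENNReal.ofReal q)
        * eLpNorm f (ENNReal.ofReal p) volume) :
    ∀ N : ℕ, ∃ c : ℝ, 0 < c ∧
      ∀ᵐ x ∂(volume : Measure (Euc d)),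
        c * (((fun g : Euc d → ℝ => adjOp σ (convOp σ g))^[N] f) x)
              ^ (((q - 1) / (p - 1)) ^ N)
          ≤ f x := by
  intro N
  obtain ⟨F, hF, hfF, hFp, hFq⟩ := exists_measurable_extremizer_enorm (by linarith) (by linarith)
    hf.1 hnorm (by rw [hext, hnorm, mul_one])
  obtain ⟨κ, hκ0, hκ, hbase⟩ := exists_mul_rpow_ladjConvOp_le hp hq2 hvalid.ne hF hFp hFq
  have hr : 1 ≤ (q - 1) / (p - 1) := (one_le_div (by linarith)).mpr (by linarith)
  have hρ : 0 ≤ ((q - 1) / (p - 1)) ^ N := pow_nonneg (zero_le_one.trans hr) N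
  obtain ⟨c, hc0, hc, hcF⟩ := exists_mul_rpow_iterate_ladjConvOp_le hr hF hκ0 hκ hbase N
  refine ⟨c.toReal, ENNReal.toReal_pos hc0 hc, ?_⟩
  filter_upwards [hcF, enorm_iterate_adjOp_convOp_le (σ := σ) hfF.le N, hfF] with x hcx hux hfx
  have hu := iterate_adjOp_convOp_nonneg (σ := σ) hfpos N x
  rw [Real.enorm_eq_ofReal hu] at hux
  rw [Real.enorm_eq_ofReal (hfpos x)] at hfx
  rw [← ENNReal.ofReal_le_ofReal_iff (hfpos x), ENNReal.ofReal_mul ENNReal.toReal_nonneg,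
    ENNReal.ofReal_toReal hc, ← ENNReal.ofReal_rpow_of_nonneg hu hρ, hfx]
  exact (mul_le_mul_right (ENNReal.rpow_le_rpow hux hρ) c).trans hcx

/-- Pointwise lower bound for extremizers in terms of iterates of `T^*T`. -/
theorem extremizer_lower_bound_iterates
    (d : ℕ) (hd : 1 ≤ d)
    (σ : Measure (Euc d)) [IsProbabilityMeasure σ]
    (hcpt : ∃ K : Set (Euc d), IsCompact K ∧ σ Kᶜ = 0)
    (p q : ℝ) (hp : 1 < p) (hpq : p < q) (hq2 : 2 ≤ q)
    (hvalid : opNorm (convOp (F := ℂ) σ) (ENNReal.ofReal p) (ENNReal.ofReal q) < ⊤)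
    (f : Euc d → ℝ) (hfpos : ∀ x, 0 ≤ f x)
    (hf : MemLp f (ENNReal.ofReal p) volume)
    (hnorm : eLpNorm f (ENNReal.ofReal p) volume = 1)
    (hext : eLpNorm (convOp σ f) (ENNReal.ofReal q) volume
      = opNorm (convOp (F := ℂ) σ) (ENNReal.ofReal p) (ENNReal.ofReal q)
        * eLpNorm f (ENNReal.ofReal p) volume) :
    ∀ N : ℕ, ∃ c : ℝ, 0 < c ∧
      ∀ᵐ x ∂(volume : Measure (Euc d)),
        c * (((fun g : Euc d → ℝ => adjOp σ (convOp σ g))^[N] f) x)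
              ^ (((q - 1) / (p - 1)) ^ N)
          ≤ f x :=
  extremizer_lower_bound_iterates_general d σ p q hp hpq hq2 hvalid f hfpos hf hnorm hext
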